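/- arXiv:2210.13313 — 4 statements merged into one kernel-verified Lean document; each statement's English description precedes it below -/
import Mathlib

section
/- The structural distance $d_{\mathrm{ST}}$ satisfies the triangle inequality: for any three discrete distributions $D_1, D_2, D_3$ over a countable set $\mathbb{X}$ (each attaining a maximum probability $p_i = \max_x D_i(x) > 0$), $d_{\mathrm{ST}}(D_1,D_3) \le d_{\mathrm{ST}}(D_1,D_2) + d_{\mathrm{ST}}(D_2,D_3)$. -/
/-- The structural distance between two discrete distributions `D₁, D₂` with maximal
probabilities `p₁, p₂`: the minimum `ε ∈ [0,1]` such that every point is either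
insignificant for both (mass at most `ε` times the max) or has equal relative mass. -/
noncomputable def structDist {X : Type*} (D₁ D₂ : X → ℝ) (p₁ p₂ : ℝ) : ℝ :=
  sInf {ε : ℝ | ε ∈ Set.Icc (0 : ℝ) 1 ∧
    ∀ x, (D₁ x ≤ ε * p₁ ∧ D₂ x ≤ ε * p₂) ∨ D₁ x / p₁ = D₂ x / p₂}

/-- The structural distance satisfies the triangle inequality. -/
theorem structDist_triangle {X : Type*} [Countable X] (D₁ D₂ D₃ : X → ℝ) (p₁ p₂ p₃ : ℝ)
    (h₁ : ∀ x, 0 ≤ D₁ x) (h₂ : ∀ x, 0 ≤ D₂ x) (h₃ : ∀ x, 0 ≤ D₃ x)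
    (hs₁ : ∑' x, D₁ x = 1) (hs₂ : ∑' x, D₂ x = 1) (hs₃ : ∑' x, D₃ x = 1)
    (hp₁ : 0 < p₁) (hp₂ : 0 < p₂) (hp₃ : 0 < p₃)
    (hmax₁ : IsGreatest (Set.range D₁) p₁)
    (hmax₂ : IsGreatest (Set.range D₂) p₂)
    (hmax₃ : IsGreatest (Set.range D₃) p₃) :
    structDist D₁ D₃ p₁ p₃ ≤ structDist D₁ D₂ p₁ p₂ + structDist D₂ D₃ p₂ p₃ := by
  set S₁₂ := {ε : ℝ | ε ∈ Set.Icc (0 : ℝ) 1 ∧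
    ∀ x, (D₁ x ≤ ε * p₁ ∧ D₂ x ≤ ε * p₂) ∨ D₁ x / p₁ = D₂ x / p₂} with hS12
  set S₂₃ := {ε : ℝ | ε ∈ Set.Icc (0 : ℝ) 1 ∧
    ∀ x, (D₂ x ≤ ε * p₂ ∧ D₃ x ≤ ε * p₃) ∨ D₂ x / p₂ = D₃ x / p₃} with hS23
  have hub₁ : ∀ x, D₁ x ≤ p₁ := fun x => hmax₁.2 ⟨x, rfl⟩
  have hub₂ : ∀ x, D₂ x ≤ p₂ := fun x => hmax₂.2 ⟨x, rfl⟩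
  have hub₃ : ∀ x, D₃ x ≤ p₃ := fun x => hmax₃.2 ⟨x, rfl⟩
  have hne12 : S₁₂.Nonempty := ⟨1, ⟨zero_le_one, le_refl 1⟩, fun x =>
    Or.inl ⟨by simpa using hub₁ x, by simpa using hub₂ x⟩⟩
  have hne23 : S₂₃.Nonempty := ⟨1, ⟨zero_le_one, le_refl 1⟩, fun x =>
    Or.inl ⟨by simpa using hub₂ x, by simpa using hub₃ x⟩⟩
  have hbdd12 : BddBelow S₁₂ := ⟨0, fun ε hε => hε.1.1⟩
  have hbdd23 : BddBelow S₂₃ := ⟨0, fun ε hε => hε.1.1⟩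
  -- key: for ε₁ ∈ S₁₂, ε₂ ∈ S₂₃, structDist D₁ D₃ ≤ ε₁ + ε₂
  have key : ∀ ε₁ ∈ S₁₂, ∀ ε₂ ∈ S₂₃, structDist D₁ D₃ p₁ p₃ ≤ ε₁ + ε₂ := by
    intro ε₁ hε₁ ε₂ hε₂
    obtain ⟨⟨h10, h11⟩, hP1⟩ := hε₁
    obtain ⟨⟨h20, h21⟩, hP2⟩ := hε₂
    set ε := min (ε₁ + ε₂) 1 with hεdef
    have hε₁le : ε₁ ≤ ε := le_min (by linarith) h11
    have hε₂le : ε₂ ≤ ε := le_min (by linarith) h21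
    have hεmem : ε ∈ {ε : ℝ | ε ∈ Set.Icc (0 : ℝ) 1 ∧
        ∀ x, (D₁ x ≤ ε * p₁ ∧ D₃ x ≤ ε * p₃) ∨ D₁ x / p₁ = D₃ x / p₃} := by
      refine ⟨⟨le_min (by linarith) zero_le_one, min_le_right _ _⟩, fun x => ?_⟩
      rcases hP1 x with ⟨ha1, ha2⟩ | heq1 <;> rcases hP2 x with ⟨hb1, hb2⟩ | heq2
      · exact Or.inl ⟨ha1.trans (by nlinarith), hb2.trans (by nlinarith)⟩
      · -- D₁ ≤ ε₁p₁, D₂ ≤ ε₁p₂, D₂/p₂ = D₃/p₃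
        refine Or.inl ⟨ha1.trans (by nlinarith), ?_⟩
        have : D₃ x / p₃ ≤ ε₁ := heq2 ▸ (div_le_iff₀ hp₂).2 (by linarith [ha2])
        calc D₃ x = (D₃ x / p₃) * p₃ := by field_simp
          _ ≤ ε₁ * p₃ := by nlinarith
          _ ≤ ε * p₃ := by nlinarith
      · refine Or.inl ⟨?_, hb2.trans (by nlinarith)⟩
        have : D₁ x / p₁ ≤ ε₂ := heq1 ▸ (div_le_iff₀ hp₂).2 (by linarith [hb1])
        calc D₁ x = (D₁ x / p₁) * p₁ := by field_simp
          _ ≤ ε₂ * p₁ := by nlinarith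
          _ ≤ ε * p₁ := by nlinarith
      · exact Or.inr (heq1.trans heq2)
    have h1 : structDist D₁ D₃ p₁ p₃ ≤ ε := csInf_le ⟨0, fun e he => he.1.1⟩ hεmem
    exact h1.trans (min_le_left _ _)
  have step1 : structDist D₁ D₃ p₁ p₃ - structDist D₂ D₃ p₂ p₃ ≤ structDist D₁ D₂ p₁ p₂ := by
    refine le_csInf hne12 fun ε₁ hε₁ => ?_
    have : structDist D₁ D₃ p₁ p₃ - ε₁ ≤ structDist D₂ D₃ p₂ p₃ :=
      le_csInf hne23 fun ε₂ hε₂ => by linarith [key ε₁ hε₁ ε₂ hε₂]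
    linarith
  linarith
end

section
/- Let $\mathcal{C}=\{u\in\mathbb{R}^k : H^T u \ge 0\}$ be a polyhedral cone given by a matrix $H\in\mathbb{R}^{k\times t}$. Then there exists $\theta>0$ such that for every $u\in\mathcal{C}$ with $\|u\|\ge 1$ there exists $u'\in\mathcal{C}$ with $\|u'\|=1$ such that for every column $h$ of $H$, either ($h\cdot u \ge \theta$ and $h\cdot u' \ge \theta$) or $h\cdot u = h\cdot u'$. -/
/-!
Choose `θ > 0` so small that every vector in the span of a subfamily of the `h i` whose inner
products with that subfamily are all at most `θ` in absolute value has norm at most `1`: for each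
of the finitely many subfamilies this is the equivalence of norms on a finite-dimensional space.
Given `u`, the admissible `u'` form a closed convex polyhedron containing `u`. Its minimum-norm
point lies in the span of the normals of its active constraints, where the inner products lie in
`[0, θ]`, so it has norm at most `1`; the segment from it to `u` crosses the unit sphere inside
the polyhedron.
-/

open RealInnerProductSpace Filter Topology

theorem IsClosed.exists_isMinOn_norm {E : Type*} [NormedAddCommGroup E] [ProperSpace E]
    {P : Set E} (hP : IsClosed P) (hne : P.Nonempty) : ∃ v ∈ P, IsMinOn norm P v := by
  obtain ⟨v, hv, hdist⟩ := hP.exists_infDist_eq_dist hne 0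
  refine ⟨v, hv, fun y hy => ?_⟩
  have := Metric.infDist_le_dist_of_mem (x := (0 : E)) hy
  rwa [hdist, dist_zero_left, dist_zero_left] at this

variable {E : Type*} [NormedAddCommGroup E] [InnerProductSpace ℝ E]

theorem exists_pos_norm_le_one_of_forall_abs_inner_le [FiniteDimensional ℝ E] {κ : Type*}
    [Finite κ] (g : κ → E) :
    ∃ c > 0, ∀ v ∈ Submodule.span ℝ (Set.range g), (∀ j, |⟪g j, v⟫| ≤ c) → ‖v‖ ≤ 1 := by
  cases nonempty_fintype κ
  set K := Submodule.span ℝ (Set.range g)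
  let L : K →ₗ[ℝ] κ → ℝ := LinearMap.pi fun j => (innerₛₗ ℝ (g j)).comp K.subtype
  have hL : LinearMap.ker L = ⊥ := by
    refine LinearMap.ker_eq_bot'.2 fun v hv => ?_
    have hperp : (v : E) ∈ Kᗮ := by
      refine (K.mem_orthogonal' _).2 fun w hw => ?_
      refine (Submodule.span_le (p := LinearMap.ker (innerₛₗ ℝ (v : E)))).2 ?_ hw
      rintro _ ⟨j, rfl⟩
      simpa [L, real_inner_comm] using congrFun hv j
    have hv0 : (v : E) ∈ K ⊓ Kᗮ := ⟨v.2, hperp⟩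
    rw [K.inf_orthogonal_eq_bot, Submodule.mem_bot] at hv0
    exact Subtype.ext hv0
  obtain ⟨C, -, hC⟩ := L.exists_antilipschitzWith hL
  refine ⟨1 / (C + 1), by positivity, fun v hv hbound => ?_⟩
  have hLv : ‖L ⟨v, hv⟩‖ ≤ 1 / (C + 1) :=
    (pi_norm_le_iff_of_nonneg (by positivity)).2 fun j => by simpa [L] using hbound j
  calc ‖v‖ = ‖(⟨v, hv⟩ : K)‖ := rfl
    _ ≤ C * ‖L ⟨v, hv⟩‖ := by simpa using hC.le_mul_dist ⟨v, hv⟩ 0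
    _ ≤ C * (1 / (C + 1)) := by gcongr
    _ ≤ 1 := by rw [mul_one_div, div_le_one (by positivity)]; linarith

theorem exists_pos_forall_set_norm_le_one [FiniteDimensional ℝ E] {ι : Type*} [Finite ι]
    (h : ι → E) :
    ∃ θ > 0, ∀ S : Set ι, ∀ v ∈ Submodule.span ℝ (h '' S), (∀ i ∈ S, |⟪h i, v⟫| ≤ θ) →
      ‖v‖ ≤ 1 := by
  choose c hc_pos hc using fun S : Set ι =>
    exists_pos_norm_le_one_of_forall_abs_inner_le (h ∘ ((↑) : S → ι))
  obtain ⟨S₀, hS₀⟩ := Finite.exists_min c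
  refine ⟨c S₀, hc_pos S₀, fun S v hv hbound => hc S v ?_ fun j => (hbound j j.2).trans (hS₀ S)⟩
  rwa [Set.range_comp, Subtype.range_coe]

/-- Moving `v` a little towards its projection onto `K` would decrease its norm unless `v ∈ K`. -/
theorem mem_of_isMinOn_norm {K : Submodule ℝ E} [K.HasOrthogonalProjection] {P : Set E} {v : E}
    (hmin : IsMinOn norm P v) (hP : ∀ᶠ y in 𝓝 v, y - v ∈ Kᗮ → y ∈ P) : v ∈ K := by
  set q := v - K.starProjection v
  have hq : q ∈ Kᗮ := K.sub_starProjection_mem_orthogonal v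
  have hvq : ⟪v, q⟫ = ‖q‖ ^ 2 := by
    have : ⟪K.starProjection v, q⟫ = 0 :=
      K.inner_right_of_mem_orthogonal (K.starProjection_apply_mem v) hq
    rw [← real_inner_self_eq_norm_sq, inner_sub_left, this, sub_zero]
  have hline : Tendsto (fun ε : ℝ => v - ε • q) (𝓝[>] 0) (𝓝 v) := by
    have : Continuous fun ε : ℝ => v - ε • q := by fun_prop
    simpa using (this.tendsto 0).mono_left nhdsWithin_le_nhds
  obtain ⟨ε, hmem, hε0, hε1⟩ := ((hline.eventually hP).and (Ioo_mem_nhdsGT one_pos)).exists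
  have hy : v - ε • q ∈ P := hmem (by simpa using K.orthogonal.smul_mem (-ε) hq)
  have hsq : ‖v‖ ^ 2 ≤ ‖v - ε • q‖ ^ 2 := by gcongr; exact hmin hy
  rw [norm_sub_sq_real, real_inner_smul_right, norm_smul, Real.norm_of_nonneg hε0.le, hvq] at hsq
  have hq0 : ‖q‖ ^ 2 ≤ 0 := by nlinarith [mul_pos hε0 (by linarith : (0 : ℝ) < 2 - ε)]
  rw [sq_nonpos_iff, norm_eq_zero, sub_eq_zero] at hq0
  exact K.starProjection_eq_self_iff.1 hq0.symm

section ThresholdPolyhedron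

variable {ι : Type*} (h : ι → E) (θ : ℝ) (u : E)

def thresholdPolyhedron : Set E :=
  {y | ∀ i, (θ ≤ ⟪h i, u⟫ ∧ θ ≤ ⟪h i, y⟫) ∨ ⟪h i, u⟫ = ⟪h i, y⟫}

theorem mem_thresholdPolyhedron_self : u ∈ thresholdPolyhedron h θ u :=
  fun _ => Or.inr rfl

theorem isClosed_thresholdPolyhedron : IsClosed (thresholdPolyhedron h θ u) := by
  simp only [thresholdPolyhedron, Set.ofPred_forall, Set.ofPred_or, Set.ofPred_and]
  exact isClosed_iInter fun i =>
    (isClosed_const.inter (isClosed_le continuous_const (by fun_prop))).union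
      (isClosed_eq continuous_const (by fun_prop))

theorem convex_thresholdPolyhedron : Convex ℝ (thresholdPolyhedron h θ u) := by
  intro x hx y hy a b ha hb hab i
  rw [inner_add_right, real_inner_smul_right, real_inner_smul_right]
  by_cases hi : θ ≤ ⟪h i, u⟫
  · have hx' : θ ≤ ⟪h i, x⟫ := (hx i).elim And.right (· ▸ hi)
    have hy' : θ ≤ ⟪h i, y⟫ := (hy i).elim And.right (· ▸ hi)
    refine Or.inl ⟨hi, ?_⟩
    calc θ = a * θ + b * θ := by rw [← add_mul, hab, one_mul]
      _ ≤ a * ⟪h i, x⟫ + b * ⟪h i, y⟫ := by gcongr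
  · have hx' := (hx i).resolve_left fun hx' => hi hx'.1
    have hy' := (hy i).resolve_left fun hy' => hi hy'.1
    exact Or.inr (by rw [← hx', ← hy', ← add_mul, hab, one_mul])

variable {h θ u}

theorem inner_nonneg_of_mem_thresholdPolyhedron (hθ : 0 < θ) {i : ι} (hu : 0 ≤ ⟪h i, u⟫) {y : E}
    (hy : y ∈ thresholdPolyhedron h θ u) : 0 ≤ ⟪h i, y⟫ :=
  (hy i).elim (fun hi => hθ.le.trans hi.2) (· ▸ hu)

theorem norm_le_one_of_isMinOn_thresholdPolyhedron [FiniteDimensional ℝ E] [Finite ι]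
    (hθ : 0 < θ)
    (hspan : ∀ S : Set ι, ∀ v ∈ Submodule.span ℝ (h '' S), (∀ i ∈ S, |⟪h i, v⟫| ≤ θ) →
      ‖v‖ ≤ 1)
    (hu : ∀ i, 0 ≤ ⟪h i, u⟫) {v : E} (hv : v ∈ thresholdPolyhedron h θ u)
    (hmin : IsMinOn norm (thresholdPolyhedron h θ u) v) : ‖v‖ ≤ 1 := by
  refine hspan {i | ⟪h i, v⟫ ≤ θ} v (mem_of_isMinOn_norm hmin ?_) fun i hi =>
    abs_le.2 ⟨by linarith [inner_nonneg_of_mem_thresholdPolyhedron hθ (hu i) hv], hi⟩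
  have hopen : ∀ i, ¬⟪h i, v⟫ ≤ θ → ∀ᶠ y in 𝓝 v, θ < ⟪h i, y⟫ := fun i hi =>
    continuousAt_const.eventually_lt (continuous_const.inner continuous_id).continuousAt
      (not_le.1 hi)
  filter_upwards [eventually_all.2 fun i => eventually_imp_distrib_left.2 (hopen i)]
    with y hy hperp i
  by_cases hi : ⟪h i, v⟫ ≤ θ
  · have : ⟪h i, y - v⟫ = 0 := Submodule.inner_right_of_mem_orthogonal
      (Submodule.subset_span (Set.mem_image_of_mem h hi)) hperp
    rw [inner_sub_right, sub_eq_zero] at this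
    exact this ▸ hv i
  · have hvi := not_le.1 hi
    exact Or.inl ⟨(hv i).elim (fun hge => hge.1) (fun heq => heq ▸ hvi.le), (hy i hi).le⟩

theorem exists_norm_eq_one_mem_thresholdPolyhedron [FiniteDimensional ℝ E] [Finite ι]
    (hθ : 0 < θ)
    (hspan : ∀ S : Set ι, ∀ v ∈ Submodule.span ℝ (h '' S), (∀ i ∈ S, |⟪h i, v⟫| ≤ θ) →
      ‖v‖ ≤ 1)
    (hu : ∀ i, 0 ≤ ⟪h i, u⟫) (hu1 : 1 ≤ ‖u‖) : ∃ u' ∈ thresholdPolyhedron h θ u, ‖u'‖ = 1 := by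
  have hself := mem_thresholdPolyhedron_self h θ u
  obtain ⟨v, hv, hmin⟩ := (isClosed_thresholdPolyhedron h θ u).exists_isMinOn_norm ⟨u, hself⟩
  have hv1 := norm_le_one_of_isMinOn_thresholdPolyhedron hθ hspan hu hv hmin
  exact (convex_thresholdPolyhedron h θ u).isPreconnected.intermediate_value hv hself
    continuous_norm.continuousOn ⟨hv1, hu1⟩

end ThresholdPolyhedron

/-- Geometry of polyhedral cones: for the polyhedral cone
`C = {u : ∀ i, ⟪h i, u⟫ ≥ 0}` there is a `θ > 0` such that every `u ∈ C` with
`‖u‖ ≥ 1` can be replaced by a unit vector `u' ∈ C` which, for each defining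
halfspace, either keeps the inner product exactly equal, or both inner products
are at least `θ`. -/
theorem polyhedral_cone_unit_projection (k t : ℕ) (h : Fin t → EuclideanSpace ℝ (Fin k)) :
    ∃ θ > (0 : ℝ), ∀ u : EuclideanSpace ℝ (Fin k),
      (∀ i, 0 ≤ ⟪h i, u⟫) → 1 ≤ ‖u‖ →
      ∃ u' : EuclideanSpace ℝ (Fin k), (∀ i, 0 ≤ ⟪h i, u'⟫) ∧ ‖u'‖ = 1 ∧
        ∀ i, (θ ≤ ⟪h i, u⟫ ∧ θ ≤ ⟪h i, u'⟫) ∨ ⟪h i, u⟫ = ⟪h i, u'⟫ := by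
  obtain ⟨θ, hθ, hspan⟩ := exists_pos_forall_set_norm_le_one h
  refine ⟨θ, hθ, fun u hu hu1 => ?_⟩
  obtain ⟨u', hu', hnorm⟩ := exists_norm_eq_one_mem_thresholdPolyhedron hθ hspan hu hu1
  exact ⟨u', fun i => inner_nonneg_of_mem_thresholdPolyhedron hθ (hu i) hu', hnorm, hu'⟩
end

section
/- For $\lambda_1,\lambda_2>0$, the total variation distance between Poisson distributions satisfies $d_{TV}(\mathrm{Poi}(\lambda_1),\mathrm{Poi}(\lambda_2)) \le \frac{e^{|\lambda_1-\lambda_2|}-e^{-|\lambda_1-\lambda_2|}}{2}$, i.e., it is at most $\sinh(|\lambda_1-\lambda_2|)$. -/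
/-!
If `λ₂ ≤ λ₁`, the Poisson weights satisfy `Poi(λ₁)(k) ≥ e^{-(λ₁-λ₂)} Poi(λ₂)(k)`, so the two laws
share a mass of at least `e^{-(λ₁-λ₂)}` and their total variation distance is at most
`1 - e^{-|λ₁-λ₂|}`. This is at most `sinh |λ₁-λ₂|` because `cosh ≥ 1`.
-/

open Real Nat

theorem tsum_abs_sub_le_of_mul_le {ι : Type*} {f g : ι → ℝ} {a c : ℝ}
    (hf : HasSum f a) (hg : HasSum g a) (hg₀ : ∀ i, 0 ≤ g i) (hc : c ≤ 1)
    (hfg : ∀ i, c * g i ≤ f i) :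
    ∑' i, |f i - g i| ≤ 2 * (1 - c) * a := by
  have hpoint : ∀ i, |f i - g i| ≤ (f i - g i) + 2 * (1 - c) * g i := by
    intro i
    have := mul_nonneg (sub_nonneg.mpr hc) (hg₀ i)
    rcases le_total (g i) (f i) with h | h
    · rw [abs_of_nonneg (sub_nonneg.mpr h)]; linarith
    · rw [abs_of_nonpos (sub_nonpos.mpr h)]; linarith [hfg i]
  have hbound : HasSum (fun i => (f i - g i) + 2 * (1 - c) * g i) (2 * (1 - c) * a) := by
    simpa using (hf.sub hg).add (hg.mul_left (2 * (1 - c)))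
  have habs : Summable (fun i => |f i - g i|) :=
    (hf.summable.abs.add hg.summable.abs).of_nonneg_of_le (fun _ => abs_nonneg _)
      (fun _ => abs_sub _ _)
  exact hbound.tsum_eq ▸ habs.tsum_le_tsum hpoint hbound.summable

theorem hasSum_poisson (l : ℝ) : HasSum (fun k : ℕ => exp (-l) * l ^ k / k !) 1 := by
  have := (NormedSpace.expSeries_div_hasSum_exp l).mul_left (exp (-l))
  rw [← exp_eq_exp_ℝ, ← exp_add, neg_add_cancel, exp_zero] at this
  simpa only [mul_div_assoc] using this

theorem exp_neg_sub_mul_poisson_le {l₁ l₂ : ℝ} (h₂ : 0 ≤ l₂) (h : l₂ ≤ l₁) (k : ℕ) :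
    exp (-(l₁ - l₂)) * (exp (-l₂) * l₂ ^ k / k !) ≤ exp (-l₁) * l₁ ^ k / k ! := by
  rw [← mul_div_assoc, ← mul_assoc, ← exp_add, show -(l₁ - l₂) + -l₂ = -l₁ by ring]
  gcongr

theorem tsum_abs_sub_poisson_le_of_le {l₁ l₂ : ℝ} (h₂ : 0 ≤ l₂) (h : l₂ ≤ l₁) :
    ∑' k : ℕ, |exp (-l₁) * l₁ ^ k / (k !) - exp (-l₂) * l₂ ^ k / k !| ≤
      2 * (1 - exp (-(l₁ - l₂))) := by
  simpa using tsum_abs_sub_le_of_mul_le (hasSum_poisson l₁) (hasSum_poisson l₂)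
    (fun k => by positivity) (exp_le_one_iff.mpr (by linarith))
    (exp_neg_sub_mul_poisson_le h₂ h)

theorem tsum_abs_sub_poisson_le {l₁ l₂ : ℝ} (h₁ : 0 ≤ l₁) (h₂ : 0 ≤ l₂) :
    ∑' k : ℕ, |exp (-l₁) * l₁ ^ k / (k !) - exp (-l₂) * l₂ ^ k / k !| ≤
      2 * (1 - exp (-|l₁ - l₂|)) := by
  rcases le_total l₂ l₁ with h | h
  · rw [abs_of_nonneg (sub_nonneg.mpr h)]
    exact tsum_abs_sub_poisson_le_of_le h₂ h
  · rw [abs_sub_comm l₁ l₂, abs_of_nonneg (sub_nonneg.mpr h)]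
    conv_lhs => enter [1, k]; rw [abs_sub_comm]
    exact tsum_abs_sub_poisson_le_of_le h₁ h

theorem one_sub_exp_neg_le_sinh (x : ℝ) : 1 - exp (-x) ≤ sinh x := by
  have := one_le_cosh x
  rw [cosh_eq] at this
  rw [sinh_eq]
  linarith

/-- The total variation distance between `Poi(λ₁)` and `Poi(λ₂)` is at most
`(e^{|λ₁-λ₂|} - e^{-|λ₁-λ₂|})/2 = sinh |λ₁ - λ₂|`. -/
theorem tv_poisson_le_sinh (l₁ l₂ : ℝ) (h₁ : 0 < l₁) (h₂ : 0 < l₂) :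
    (1 / 2) * ∑' k : ℕ,
        |Real.exp (-l₁) * l₁ ^ k / (Nat.factorial k) -
          Real.exp (-l₂) * l₂ ^ k / (Nat.factorial k)| ≤
      (Real.exp |l₁ - l₂| - Real.exp (-|l₁ - l₂|)) / 2 := by
  have htv := tsum_abs_sub_poisson_le h₁.le h₂.le
  have hsinh := one_sub_exp_neg_le_sinh |l₁ - l₂|
  rw [sinh_eq] at hsinh
  linarith
end

section
/- Let $W$ be an integer-valued random variable and let $M_a$ be a mode of $W$, where $W$ follows a discrete exponential family distribution with parameter $a$, i.e., $\Pr[W=x]=e^{-a\cdot T(x)}/Z(a)$ with $Z(a)=\sum_{x\in\mathbb{Z}}e^{-a\cdot T(x)}$ finite. If $\mathbb{E}[|W-M_a|] \le C$, then $e^{a\cdot T(M_a)} Z(a) \le 4C + O(1)$; concretely, $e^{a\cdot T(M_a)} Z(a) \le 4\,\mathbb{E}[|W-M_a|] + 3$. -/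
/-!
Normalise the weights to `w x = e^{a·T(M)} e^{-a·T(x)}`, so that `0 ≤ w ≤ 1` and `S = ∑ w` is the
quantity to bound. Since `w ≤ 1`, for every `t : ℕ` the weight `t · w x` exceeds `|x - M| · w x` by at
most the tent `max (t - |x - M|) 0`, whose total mass is `t²`; hence `S · 𝔼|W - M| ≥ t S - t²`.
Taking `t` the integer nearest to `S / 2` gives `S · 𝔼|W - M| ≥ (S² - 1) / 4`, i.e. `S ≤ 4 𝔼|W - M| + 1`.
-/

open Finset Matrix

lemma sum_Icc_abs_intCast (t : ℕ) : ∑ n ∈ Icc (-(t : ℤ)) t, |(n : ℝ)| = t * (t + 1) := by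
  induction t with
  | zero => simp
  | succ t ih =>
    have hIcc : Icc (-((t : ℤ) + 1)) ((t : ℤ) + 1) =
        insert (-((t : ℤ) + 1)) (insert ((t : ℤ) + 1) (Icc (-(t : ℤ)) t)) := by
      ext x; simp only [mem_Icc, mem_insert]; omega
    push_cast
    rw [hIcc, sum_insert (by simp; omega), sum_insert (by simp), ih]
    push_cast
    rw [abs_of_nonpos (by linarith), abs_of_nonneg (by linarith)]
    ring

lemma tent_eq_zero_of_notMem_Icc {t : ℕ} {n : ℤ} (hn : n ∉ Icc (-(t : ℤ)) t) :
    max ((t : ℝ) - |(n : ℝ)|) 0 = 0 := by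
  have : (t : ℤ) ≤ |n| := by rw [mem_Icc] at hn; rcases abs_cases n with ⟨h, _⟩ | ⟨h, _⟩ <;> omega
  exact max_eq_right (by rw [sub_nonpos]; exact_mod_cast this)

lemma hasSum_tent (t : ℕ) (M : ℤ) :
    HasSum (fun x : ℤ => max ((t : ℝ) - |(x : ℝ) - M|) 0) ((t : ℝ) ^ 2) := by
  have hmass : ∑ n ∈ Icc (-(t : ℤ)) t, max ((t : ℝ) - |(n : ℝ)|) 0 = (t : ℝ) ^ 2 := by
    have htent : ∀ n ∈ Icc (-(t : ℤ)) t, max ((t : ℝ) - |(n : ℝ)|) 0 = t - |(n : ℝ)| := by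
      intro n hn
      have : |n| ≤ (t : ℤ) := abs_le.mpr (mem_Icc.mp hn)
      exact max_eq_left (by rw [sub_nonneg]; exact_mod_cast this)
    rw [sum_congr rfl htent, sum_sub_distrib, sum_Icc_abs_intCast, sum_const, Int.card_Icc,
      nsmul_eq_mul, show ((t : ℤ) + 1 - -t).toNat = 2 * t + 1 by omega]
    push_cast
    ring
  have h0 := hmass ▸ hasSum_sum_of_ne_finset_zero (L := .unconditional ℤ)
    fun n hn => tent_eq_zero_of_notMem_Icc hn
  rw [← (Equiv.subRight M).hasSum_iff] at h0
  simpa [Function.comp_def] using h0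

lemma mul_sub_max_sub_le_mul {t d w : ℝ} (hw₀ : 0 ≤ w) (hw₁ : w ≤ 1) :
    t * w - max (t - d) 0 ≤ d * w := by
  rcases le_total t d with h | h
  · nlinarith [le_max_right (t - d) 0, mul_le_mul_of_nonneg_right h hw₀]
  · rw [max_eq_left (sub_nonneg.mpr h)]
    nlinarith [mul_le_mul_of_nonneg_left hw₁ (sub_nonneg.mpr h)]

lemma mul_tsum_sub_sq_le_tsum_abs_sub_mul {w : ℤ → ℝ} (M : ℤ) (t : ℕ) (hw₀ : ∀ x, 0 ≤ w x)
    (hw₁ : ∀ x, w x ≤ 1) (hw : Summable w) (hMw : Summable fun x : ℤ => |(x : ℝ) - M| * w x) :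
    t * ∑' x, w x - t ^ 2 ≤ ∑' x : ℤ, |(x : ℝ) - M| * w x := by
  have hlower := (hw.hasSum.mul_left (t : ℝ)).sub (hasSum_tent t M)
  exact hasSum_le (fun x => mul_sub_max_sub_le_mul (hw₀ x) (hw₁ x)) hlower hMw.hasSum

lemma exists_nat_sq_sub_one_div_four_le (S : ℝ) (hS : 0 ≤ S) :
    ∃ t : ℕ, (S ^ 2 - 1) / 4 ≤ t * S - t ^ 2 := by
  refine ⟨⌊S / 2 + 1 / 2⌋₊, ?_⟩
  have hle := Nat.floor_le (a := S / 2 + 1 / 2) (by positivity)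
  have hlt := Nat.lt_floor_add_one (S / 2 + 1 / 2)
  nlinarith

lemma tsum_le_four_mul_tsum_abs_sub_mul_div_add_one {w : ℤ → ℝ} (M : ℤ) (hw₀ : ∀ x, 0 ≤ w x)
    (hw₁ : ∀ x, w x ≤ 1) (hw : Summable w)
    (hMw : Summable fun x : ℤ => |(x : ℝ) - M| * (w x / ∑' y, w y)) (hS : 1 ≤ ∑' x, w x) :
    ∑' x, w x ≤ 4 * ∑' x : ℤ, |(x : ℝ) - M| * (w x / ∑' y, w y) + 1 := by
  set S := ∑' x, w x
  set E := ∑' x : ℤ, |(x : ℝ) - M| * (w x / S)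
  have hweighted : (fun x : ℤ => |(x : ℝ) - M| * w x) =
      fun x : ℤ => S * (|(x : ℝ) - M| * (w x / S)) := by
    funext x; field_simp
  have hSE : ∑' x : ℤ, |(x : ℝ) - M| * w x = S * E := by rw [hweighted, tsum_mul_left]
  obtain ⟨t, ht⟩ := exists_nat_sq_sub_one_div_four_le S (by linarith)
  have hkey := mul_tsum_sub_sq_le_tsum_abs_sub_mul M t hw₀ hw₁ hw (hweighted ▸ hMw.mul_left S)
  rw [hSE] at hkey
  nlinarith

/-- For a discrete exponential family distribution `Pr[W = x] = e^{-a·T(x)}/Z(a)` on `ℤ`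
with mode `M` (so `a·T(x) ≥ a·T(M)` for all `x`), the partition function satisfies
`e^{a·T(M)} Z(a) ≤ 4 𝔼|W - M| + 3`. -/
theorem partition_function_upper_bound (k : ℕ) (T : ℤ → Fin k → ℝ) (a : Fin k → ℝ) (M : ℤ)
    (hZ : Summable fun x : ℤ => Real.exp (-(a ⬝ᵥ T x)))
    (hmode : ∀ x : ℤ, a ⬝ᵥ T M ≤ a ⬝ᵥ T x)
    (hAbsSum : Summable fun x : ℤ =>
      |(x : ℝ) - M| * (Real.exp (-(a ⬝ᵥ T x)) / ∑' y : ℤ, Real.exp (-(a ⬝ᵥ T y)))) :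
    Real.exp (a ⬝ᵥ T M) * (∑' y : ℤ, Real.exp (-(a ⬝ᵥ T y))) ≤
      4 * (∑' x : ℤ, |(x : ℝ) - M| *
        (Real.exp (-(a ⬝ᵥ T x)) / ∑' y : ℤ, Real.exp (-(a ⬝ᵥ T y)))) + 3 := by
  set c := Real.exp (a ⬝ᵥ T M)
  set w : ℤ → ℝ := fun x => c * Real.exp (-(a ⬝ᵥ T x))
  have hw₁ (x : ℤ) : w x ≤ 1 := by
    simp only [w, c, ← Real.exp_add, Real.exp_le_one_iff]; linarith [hmode x]
  have hwM : w M = 1 := by simp [w, c, ← Real.exp_add]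
  have hw : Summable w := hZ.mul_left c
  have hS : ∑' x, w x = c * ∑' y : ℤ, Real.exp (-(a ⬝ᵥ T y)) := tsum_mul_left
  have hnormalised (x : ℤ) :
      w x / ∑' y, w y = Real.exp (-(a ⬝ᵥ T x)) / ∑' y : ℤ, Real.exp (-(a ⬝ᵥ T y)) := by
    rw [hS]; exact mul_div_mul_left _ _ (Real.exp_pos _).ne'
  have hbound := tsum_le_four_mul_tsum_abs_sub_mul_div_add_one M (fun x => by positivity) hw₁ hw
    (by simpa only [hnormalised] using hAbsSum) (hwM ▸ hw.le_tsum M fun x _ => by positivity)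
  simp only [hnormalised] at hbound
  rw [hS] at hbound
  linarith
end
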